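/- Let G be a simple graph and v a vertex such that for every vertex c with c ≠ v and ¬G.Adj c v one has g_v(G) ≥ dist_G(c,v) + 1. Then the one-edge local girth of v satisfies g_v^{(1)}(G) = sup over all vertices c with c ≠ v and ¬G.Adj c v of ( dist_G(c,v) + 1 ), and this common value also equals the supremum over such c of the infimum of the lengths of cycles of G+(c,v) containing the edge {c,v}. -/

import Mathlib

open SimpleGraph

variable {V : Type*}

/-- `G + (c,v)`: the graph obtained from `G` by adding the edge `{c, v}`. -/
def addEdge (G : SimpleGraph V) (c v : V) : SimpleGraph V :=
  G ⊔ SimpleGraph.fromEdgeSet {s(c, v)}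

/-- The local girth of a vertex `v`: the infimum (in `ℕ∞`) of the lengths of
cycles of `G` passing through `v`. -/
noncomputable def localGirth (G : SimpleGraph V) (v : V) : ℕ∞ :=
  ⨅ (a : V) (w : G.Walk a a) (_ : w.IsCycle) (_ : v ∈ w.support), (w.length : ℕ∞)

/-- The edge local girth of `e`: the infimum (in `ℕ∞`) of the lengths of
cycles of `G` containing the edge `e`. -/
noncomputable def edgeLocalGirth (G : SimpleGraph V) (e : Sym2 V) : ℕ∞ :=
  ⨅ (a : V) (w : G.Walk a a) (_ : w.IsCycle) (_ : e ∈ w.edges), (w.length : ℕ∞)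

/-- A length-`r` valid sequence for `v` in `G`: pairwise distinct vertices,
each distinct from `v` and not adjacent to `v` in `G`. -/
def ValidSeq (G : SimpleGraph V) (v : V) {r : ℕ} (s : Fin r → V) : Prop :=
  Function.Injective s ∧ ∀ i, s i ≠ v ∧ ¬ G.Adj (s i) v

/-- The graph sequence of a sequence `s`: `graphSeq G v s 0 = G₁ = G` and
`graphSeq G v s i = G_{i+1} = G_i + (s_i, v)`. -/
def graphSeq (G : SimpleGraph V) (v : V) {r : ℕ} (s : Fin r → V) : ℕ → SimpleGraph V
  | 0 => G
  | i + 1 => if h : i < r then addEdge (graphSeq G v s i) (s ⟨i, h⟩) v else graphSeq G v s i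

/-- The `r`-edge local girth of `v` in `G`: the supremum, over all length-`r`
valid sequences `s` for `v`, of the local girth of `v` in the final graph. -/
noncomputable def multiEdgeLocalGirth (G : SimpleGraph V) (v : V) (r : ℕ) : ℕ∞ :=
  ⨆ (s : Fin r → V) (_ : ValidSeq G v s), localGirth (graphSeq G v s r) v

/-- The `r`-edge local girth of `c` with respect to `v`:
`g_v(G+(c,v))` if `r = 1`, and `g_v^{(r-1)}(G+(c,v))` if `r ≥ 2`. -/
noncomputable def cnMultiEdgeLocalGirth (G : SimpleGraph V) (c v : V) (r : ℕ) : ℕ∞ :=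
  if r = 1 then localGirth (addEdge G c v) v
  else multiEdgeLocalGirth (addEdge G c v) v (r - 1)

/-!
Every cycle through `v` either uses the edge `e = {c, v}` or is a cycle of `G + (c, v) - e = G`,
so `g_v(G + (c, v))` is the minimum of the edge local girth of `e` and `g_v(G)`. A cycle through
`e` is `e` together with a `c`–`v` walk avoiding `e`, which makes the edge local girth of `e`
equal to `dist_G(c, v) + 1`; the hypothesis says exactly that this term realises the minimum.
-/

namespace SimpleGraph

variable {H : SimpleGraph V}

lemma localGirth_le_length {v a : V} {w : H.Walk a a} (hw : w.IsCycle) (hv : v ∈ w.support) :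
    localGirth H v ≤ w.length :=
  iInf_le_of_le a <| iInf_le_of_le w <| iInf_le_of_le hw <| iInf_le_of_le hv le_rfl

lemma edgeLocalGirth_le_length {e : Sym2 V} {a : V} {w : H.Walk a a} (hw : w.IsCycle)
    (he : e ∈ w.edges) : edgeLocalGirth H e ≤ w.length :=
  iInf_le_of_le a <| iInf_le_of_le w <| iInf_le_of_le hw <| iInf_le_of_le he le_rfl

lemma localGirth_anti {H' : SimpleGraph V} (h : H ≤ H') (v : V) :
    localGirth H' v ≤ localGirth H v :=
  le_iInf fun _ => le_iInf fun w => le_iInf fun hw => le_iInf fun hv => by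
    simpa using localGirth_le_length ((Walk.isCycle_mapLe h).mpr hw)
      (by rwa [Walk.support_mapLe_eq_support])

lemma localGirth_le_edgeLocalGirth {v : V} {e : Sym2 V} (hv : v ∈ e) :
    localGirth H v ≤ edgeLocalGirth H e := by
  obtain ⟨x, y⟩ := e
  refine le_iInf fun _ => le_iInf fun w => le_iInf fun hw => le_iInf fun he => ?_
  rcases Sym2.mem_iff.mp hv with rfl | rfl
  · exact localGirth_le_length hw (w.fst_mem_support_of_mem_edges he)
  · exact localGirth_le_length hw (w.snd_mem_support_of_mem_edges he)

lemma localGirth_eq_min {v : V} {e : Sym2 V} (hv : v ∈ e) :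
    localGirth H v = min (edgeLocalGirth H e) (localGirth (H.deleteEdges {e}) v) := by
  refine le_antisymm
    (le_min (localGirth_le_edgeLocalGirth hv) (localGirth_anti (H.deleteEdges_le _) v)) ?_
  refine le_iInf fun _ => le_iInf fun w => le_iInf fun hw => le_iInf fun hvw => ?_
  by_cases he : e ∈ w.edges
  · exact min_le_of_left_le (edgeLocalGirth_le_length hw he)
  · refine min_le_of_right_le ?_
    simpa using localGirth_le_length (hw.toDeleteEdges H {e}
      fun _ h₁ h₂ => he (Set.mem_singleton_iff.mp h₂ ▸ h₁))
      (by simpa using hvw)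

lemma Walk.IsTrail.exists_walk_notMem_edges_length_lt {u x y : V} {c : H.Walk u u}
    (hc : c.IsTrail) (he : s(x, y) ∈ c.edges) :
    ∃ p : H.Walk x y, s(x, y) ∉ p.edges ∧ p.length < c.length := by
  classical
  have hy := c.snd_mem_support_of_mem_edges he
  have he' : s(x, y) ∈ (c.rotate y hy).edges := (c.rotate_edges y hy).mem_iff.mpr he
  obtain ⟨p₁, p₂, hsplit⟩ :=
    Walk.mem_support_iff_exists_append.mp ((c.rotate y hy).fst_mem_support_of_mem_edges he')
  have hnodup := (hc.rotate hy).edges_nodup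
  have hlen := c.length_rotate y hy
  rw [hsplit, Walk.edges_append] at hnodup he'
  rw [hsplit, Walk.length_append] at hlen
  have hdisj := (List.nodup_append.mp hnodup).2.2
  rcases List.mem_append.mp he' with h₁ | h₂
  · refine ⟨p₂, fun h₂ => hdisj _ h₁ _ h₂ rfl, ?_⟩
    have hpos := List.length_pos_of_mem h₁
    rw [Walk.length_edges] at hpos
    omega
  · refine ⟨p₁.reverse, by simpa using fun h₁ => hdisj _ h₁ _ h₂ rfl, ?_⟩
    have hpos := List.length_pos_of_mem h₂
    rw [Walk.length_edges] at hpos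
    rw [Walk.length_reverse]
    omega

lemma edgeLocalGirth_eq_edist_deleteEdges_add_one {x y : V} (hxy : H.Adj x y) :
    edgeLocalGirth H s(x, y) = (H.deleteEdges {s(x, y)}).edist x y + 1 := by
  classical
  refine le_antisymm ?_ ?_
  · rcases eq_or_ne ((H.deleteEdges {s(x, y)}).edist x y) ⊤ with h | h
    · simp [h]
    obtain ⟨p, hp⟩ := (reachable_of_edist_ne_top h).exists_walk_length_eq_edist
    let q := p.bypass.mapLe (H.deleteEdges_le {s(x, y)})
    have hq : s(y, x) ∉ q.edges := fun hmem => by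
      rw [Walk.edges_mapLe_eq_edges] at hmem
      simpa [Sym2.eq_swap] using p.bypass.edges_subset_edgeSet hmem
    have hcycle : (Walk.cons hxy.symm q).IsCycle :=
      Walk.cons_isCycle_iff _ _ |>.mpr ⟨(Walk.isPath_mapLe _).mpr p.bypass_isPath, hq⟩
    calc edgeLocalGirth H s(x, y) ≤ (Walk.cons hxy.symm q).length :=
          edgeLocalGirth_le_length hcycle (by simp [Sym2.eq_swap])
      _ = p.bypass.length + 1 := by simp [q]
      _ ≤ _ := by rw [← hp]; exact_mod_cast Nat.add_le_add_right p.length_bypass_le_length 1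
  · refine le_iInf fun _ => le_iInf fun w => le_iInf fun hw => le_iInf fun he => ?_
    obtain ⟨p, hp, hlt⟩ := hw.isTrail.exists_walk_notMem_edges_length_lt he
    calc (H.deleteEdges {s(x, y)}).edist x y + 1 ≤ (p.toDeleteEdge _ hp).length + 1 :=
          by gcongr; exact edist_le _
      _ ≤ w.length := by simpa using Order.add_one_le_of_lt (by exact_mod_cast hlt)

end SimpleGraph

section addEdge

variable {G : SimpleGraph V} {c v : V}

lemma addEdge_adj (hcv : c ≠ v) : (addEdge G c v).Adj c v := by
  simp [addEdge, hcv]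

lemma addEdge_deleteEdges (hadj : ¬G.Adj c v) : (addEdge G c v).deleteEdges {s(c, v)} = G := by
  simp [addEdge, hadj]

lemma edgeLocalGirth_addEdge (hcv : c ≠ v) (hadj : ¬G.Adj c v) :
    edgeLocalGirth (addEdge G c v) s(c, v) = G.edist c v + 1 := by
  rw [edgeLocalGirth_eq_edist_deleteEdges_add_one (addEdge_adj hcv), addEdge_deleteEdges hadj]

lemma localGirth_addEdge (hcv : c ≠ v) (hadj : ¬G.Adj c v) :
    localGirth (addEdge G c v) v = min (G.edist c v + 1) (localGirth G v) := by
  rw [localGirth_eq_min (Sym2.mem_mk_right c v), edgeLocalGirth_addEdge hcv hadj,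
    addEdge_deleteEdges hadj]

end addEdge

lemma multiEdgeLocalGirth_one (G : SimpleGraph V) (v : V) :
    multiEdgeLocalGirth G v 1 =
      ⨆ (c : V) (_ : c ≠ v) (_ : ¬ G.Adj c v), localGirth (addEdge G c v) v := by
  refine le_antisymm (iSup₂_le fun s hs => ?_) (iSup_le fun c => iSup₂_le fun hcv hadj => ?_)
  · exact le_iSup_of_le (s 0) <| le_iSup₂_of_le (hs.2 0).1 (hs.2 0).2 le_rfl
  · exact le_iSup₂_of_le (fun _ => c) ⟨fun a b _ => Subsingleton.elim a b, fun _ => ⟨hcv, hadj⟩⟩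
      le_rfl

/-- If for every `c ≠ v` not adjacent to `v` one has
`g_v(G) ≥ dist_G(c,v) + 1`, then the one-edge local girth of `v` satisfies
`g_v^{(1)}(G) = sup_{c ≠ v, ¬G.Adj c v} (dist_G(c,v) + 1)`, and this also equals
`sup_{c ≠ v, ¬G.Adj c v}` of the infimum of the lengths of cycles of `G+(c,v)`
containing the edge `{c,v}`. -/
theorem stmt_10 (G : SimpleGraph V) (v : V)
    (hg : ∀ c : V, c ≠ v → ¬ G.Adj c v → G.edist c v + 1 ≤ localGirth G v) :
    multiEdgeLocalGirth G v 1 =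
      (⨆ (c : V) (_ : c ≠ v) (_ : ¬ G.Adj c v), (G.edist c v + 1)) ∧
    multiEdgeLocalGirth G v 1 =
      ⨆ (c : V) (_ : c ≠ v) (_ : ¬ G.Adj c v), edgeLocalGirth (addEdge G c v) s(c, v) := by
  have hloc : ∀ c, c ≠ v → ¬ G.Adj c v → localGirth (addEdge G c v) v = G.edist c v + 1 :=
    fun c hcv hadj => by rw [localGirth_addEdge hcv hadj, min_eq_left (hg c hcv hadj)]
  rw [multiEdgeLocalGirth_one]
  exact ⟨iSup_congr fun c => iSup_congr fun hcv => iSup_congr fun hadj => hloc c hcv hadj,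
    iSup_congr fun c => iSup_congr fun hcv => iSup_congr fun hadj =>
      (hloc c hcv hadj).trans (edgeLocalGirth_addEdge hcv hadj).symm⟩
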